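/- Let (X,F) be a Smale space. Then the chain recurrent set R(F) decomposes as a finite disjoint union of compact F-invariant sets B₁, …, B_l such that each (B_i, F|_{B_i}) is a transitive Smale space. -/

import Mathlib

open Filter Topology Set

/-- `f` is expansive with expansive constant `c`. -/
def Expansive {X : Type*} [MetricSpace X] (f : Equiv.Perm X) (c : ℝ) : Prop :=
  ∀ p q : X, p ≠ q → ∃ n : ℤ, c < dist ((f ^ n) p) ((f ^ n) q)

/-- The ε-stable set of `x`. -/
def Ws {X : Type*} [MetricSpace X] (f : Equiv.Perm X) (ε : ℝ) (x : X) : Set X :=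
  {y | ∀ n : ℕ, dist ((f ^ (n : ℤ)) x) ((f ^ (n : ℤ)) y) < ε}

/-- The ε-unstable set of `x`. -/
def Wu {X : Type*} [MetricSpace X] (f : Equiv.Perm X) (ε : ℝ) (x : X) : Set X :=
  {y | ∀ n : ℕ, dist ((f ^ (-(n : ℤ))) x) ((f ^ (-(n : ℤ))) y) < ε}

/-- The stable set of `x`. -/
def stableSet {X : Type*} [MetricSpace X] (f : Equiv.Perm X) (x : X) : Set X :=
  {y | Filter.Tendsto (fun n : ℕ => dist ((f ^ (n : ℤ)) x) ((f ^ (n : ℤ)) y))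
    Filter.atTop (nhds 0)}

/-- The unstable set of `x`. -/
def unstableSet {X : Type*} [MetricSpace X] (f : Equiv.Perm X) (x : X) : Set X :=
  {y | Filter.Tendsto (fun n : ℕ => dist ((f ^ (-(n : ℤ))) x) ((f ^ (-(n : ℤ))) y))
    Filter.atTop (nhds 0)}

/-- Canonical coordinates: for all sufficiently small ε > 0 there is δ > 0 such that
points at distance < δ have a unique bracket `[x,y] = W^s_ε(x) ∩ W^u_ε(y)`. -/
def CanonicalCoords {X : Type*} [MetricSpace X] (f : Equiv.Perm X) : Prop :=
  ∃ ε₀ > 0, ∀ ε : ℝ, 0 < ε → ε ≤ ε₀ → ∃ δ > 0, ∀ x y : X, dist x y < δ →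
    ∃! z, z ∈ Ws f ε x ∩ Wu f ε y

/-- A Smale space: an expansive homeomorphism with canonical coordinates. -/
def IsSmale {X : Type*} [MetricSpace X] (f : Equiv.Perm X) : Prop :=
  Continuous (⇑f) ∧ Continuous (⇑f.symm) ∧ (∃ c > 0, Expansive f c) ∧ CanonicalCoords f

/-- Topological transitivity. -/
def TopTransitive {X : Type*} [MetricSpace X] (f : Equiv.Perm X) : Prop :=
  ∀ U V : Set X, IsOpen U → IsOpen V → U.Nonempty → V.Nonempty →
    ∃ n : ℕ, ((f ^ (n : ℤ)) ⁻¹' U ∩ V).Nonempty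

/-- A periodic point of `f`. -/
def IsPeriodicPoint {X : Type*} [MetricSpace X] (f : Equiv.Perm X) (p : X) : Prop :=
  ∃ N : ℕ, 0 < N ∧ (f ^ (N : ℤ)) p = p

/-- A factor map (surjective continuous semiconjugacy). -/
def IsFactorMap {X Y : Type*} [MetricSpace X] [MetricSpace Y]
    (F : Equiv.Perm X) (f : Equiv.Perm Y) (π : X → Y) : Prop :=
  Continuous π ∧ Function.Surjective π ∧ ∀ x, π (F x) = f (π x)

/-- A map is u-resolving if it is injective on unstable sets. -/
def UResolving {X Y : Type*} [MetricSpace X] (F : Equiv.Perm X) (π : X → Y) : Prop :=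
  ∀ x : X, Set.InjOn π (unstableSet F x)

/-- A map is s-resolving if it is injective on stable sets. -/
def SResolving {X Y : Type*} [MetricSpace X] (F : Equiv.Perm X) (π : X → Y) : Prop :=
  ∀ x : X, Set.InjOn π (stableSet F x)

/-- `x` is chain recurrent: for every `ε > 0` there is an `ε`-pseudo-orbit from `x`
back to `x`. -/
def ChainRecurrent {X : Type*} [MetricSpace X] (f : Equiv.Perm X) (x : X) : Prop :=
  ∀ ε > 0, ∃ n : ℕ, 0 < n ∧ ∃ z : ℕ → X, z 0 = x ∧ z n = x ∧
    ∀ i < n, dist (f (z i)) (z (i + 1)) < ε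

/-- Topological transitivity of `f` restricted to an invariant set `B`. -/
def TransitiveOnSet {X : Type*} [MetricSpace X] (f : Equiv.Perm X) (B : Set X) : Prop :=
  ∀ U V : Set X, IsOpen U → IsOpen V → (U ∩ B).Nonempty → (V ∩ B).Nonempty →
    ∃ n : ℕ, ((f ^ (n : ℤ)) ⁻¹' U ∩ V ∩ B).Nonempty

/-- The restriction of `f` to the invariant set `B` is a Smale space: expansive with
canonical coordinates within `B`. -/
def IsSmaleOnSet {X : Type*} [MetricSpace X] (f : Equiv.Perm X) (B : Set X) : Prop :=
  (∃ c > 0, ∀ p ∈ B, ∀ q ∈ B, p ≠ q → ∃ n : ℤ, c < dist ((f ^ n) p) ((f ^ n) q)) ∧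
  ∃ ε₀ > 0, ∀ ε : ℝ, 0 < ε → ε ≤ ε₀ → ∃ δ > 0, ∀ x ∈ B, ∀ y ∈ B, dist x y < δ →
    ∃! z, z ∈ B ∩ Ws f ε x ∩ Wu f ε y
/-
Write `a ≼ b` when for every `γ > 0` there is a `γ`-pseudo-orbit from `a` to `b`; the chain
recurrent set is `{x | x ≼ x}` and chain equivalence splits it into chain classes. If `x, y` are
nearby chain recurrent points, their bracket `z ∈ W^s_ε(x) ∩ W^u_ε(y)` satisfies `y ≼ z ≼ x`,
since forward iterates contract `W^s_ε` and backward iterates contract `W^u_ε` (a consequence of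
expansivity and compactness). So nearby recurrent points are equivalent: the classes are open and
closed in the compact set `R(F)`, hence finitely many, and each class contains the brackets of its
points, which makes it a Smale space. For transitivity, a periodic pseudo-orbit `v → u → v` inside
a class is shadowed by a periodic point (Bowen's shadowing, by iterated brackets, plus
expansivity); that point is chain recurrent and close to `v`, hence lies in the class.
-/

open Relation

section Sequences

variable {α : Type*} {r : α → α → Prop} {a b c : α}

theorem Relation.transGen_iff_exists_seq :
    TransGen r a b ↔ ∃ n, 0 < n ∧ ∃ z : ℕ → α, z 0 = a ∧ z n = b ∧
      ∀ i < n, r (z i) (z (i + 1)) := by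
  constructor
  · intro h
    induction h with
    | @single b hab => exact ⟨1, one_pos, fun i => if i = 0 then a else b, by simp, by simp,
        by simpa using hab⟩
    | @tail b c _ hbc ih =>
      obtain ⟨n, hn, z, hz0, hzn, hz⟩ := ih
      refine ⟨n + 1, n.succ_pos, fun i => if i ≤ n then z i else c, by simp [hz0], by simp,
        fun i hi => ?_⟩
      rcases Nat.lt_or_ge i n with hin | hin
      · simpa [hin.le, Nat.succ_le_of_lt hin] using hz i hin
      · obtain rfl : i = n := by omega
        simpa [hzn] using hbc
  · rintro ⟨n, hn, z, rfl, rfl, hz⟩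
    induction n with
    | zero => omega
    | succ n ih =>
      rcases Nat.eq_zero_or_pos n with rfl | hn
      · exact .single (hz 0 one_pos)
      · exact (ih hn fun i hi => hz i (by omega)).tail (hz n n.lt_succ_self)

theorem Relation.TransGen.exists_seq_through (hab : TransGen r a b) (hbc : TransGen r b c) :
    ∃ m n : ℕ, 0 < m ∧ 0 < n ∧ ∃ z : ℕ → α, z 0 = a ∧ z m = b ∧ z (m + n) = c ∧
      ∀ i < m + n, r (z i) (z (i + 1)) := by
  obtain ⟨m, hm, z₁, h₁0, h₁m, h₁⟩ := transGen_iff_exists_seq.1 hab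
  obtain ⟨n, hn, z₂, h₂0, h₂n, h₂⟩ := transGen_iff_exists_seq.1 hbc
  refine ⟨m, n, hm, hn, fun i => if i ≤ m then z₁ i else z₂ (i - m), by simp [h₁0],
    by simp [h₁m], by simp [hn.ne', h₂n], fun i hi => ?_⟩
  rcases Nat.lt_or_ge i m with him | him
  · simpa [him.le, Nat.succ_le_of_lt him] using h₁ i him
  · have hnext : ¬ i + 1 ≤ m := by omega
    simp only [hnext, if_false]
    rcases him.eq_or_lt with rfl | him'
    · simpa [h₁m, ← h₂0] using h₂ 0 hn
    · rw [if_neg him'.not_ge, show i + 1 - m = i - m + 1 by omega]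
      exact h₂ (i - m) (by omega)

theorem exists_periodic_of_loop {P : ℕ} (hP : 0 < P) {z : ℕ → α} (hzP : z P = z 0)
    (hz : ∀ i < P, r (z i) (z (i + 1))) :
    ∃ ζ : ℤ → α, Function.Periodic ζ P ∧ (∀ t, r (ζ t) (ζ (t + 1))) ∧ ∀ i < P, ζ i = z i := by
  refine ⟨fun t => z (t % P).toNat, fun t => by simp, fun t => ?_, fun i hi => ?_⟩
  · have hs0 : 0 ≤ t % P := Int.emod_nonneg _ (by omega)
    have hsP : t % P < P := Int.emod_lt_of_pos _ (by omega)
    -- `z P = z 0` handles the wrap-around from index `P - 1` to index `0`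
    have hnext : z ((t + 1) % P).toNat = z ((t % P).toNat + 1) := by
      have ht : t + 1 = (t % P + 1) + P * (t / P) := by
        have := Int.emod_add_mul_ediv t P
        omega
      rw [ht, Int.add_mul_emod_self_left]
      rcases (show t % P + 1 < P ∨ t % P + 1 = P by omega) with h | h
      · rw [Int.emod_eq_of_lt (by omega) h]
        congr 1
        omega
      · rw [h, Int.emod_self, Int.toNat_zero, ← hzP]
        congr 1
        omega
    dsimp only
    rw [hnext]
    exact hz _ (by omega)
  · dsimp only
    rw [Int.emod_eq_of_lt (by omega) (by omega), Int.toNat_natCast]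

theorem exists_seq_of_step {P : ℕ → α → Prop} {Q : α → α → Prop} (h0 : P 0 a)
    (h : ∀ k y, P k y → ∃ y', P (k + 1) y' ∧ Q y y') :
    ∃ x : ℕ → α, (∀ k, P k (x k)) ∧ ∀ k, Q (x k) (x (k + 1)) := by
  choose f hfP hfQ using h
  let x : ∀ k, {y // P k y} := fun k =>
    Nat.rec (motive := fun k => {y // P k y}) ⟨a, h0⟩ (fun k y => ⟨f k y.1 y.2, hfP k y.1 y.2⟩) k
  exact ⟨fun k => (x k).1, fun k => (x k).2, fun k => hfQ k _ _⟩

end Sequences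

section Partition

variable {α : Type*}

theorem exists_fin_partition {R : Set α} {C : α → Set α} (hmem : ∀ x ∈ R, x ∈ C x)
    (hsub : ∀ x, C x ⊆ R) (heq : ∀ x y, (C x ∩ C y).Nonempty → C x = C y)
    (hfin : (C '' R).Finite) :
    ∃ (l : ℕ) (B : Fin l → Set α), (∀ i, ∃ x, B i = C x) ∧
      (∀ i j, i ≠ j → Disjoint (B i) (B j)) ∧ R = ⋃ i, B i := by
  obtain ⟨l, B, hB⟩ := hfin.fin_embedding
  have hBC : ∀ i, ∃ x, B i = C x := fun i => by
    obtain ⟨x, -, hx⟩ : B i ∈ C '' R := hB ▸ mem_range_self i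
    exact ⟨x, hx.symm⟩
  refine ⟨l, B, hBC, fun i j hij => ?_, ?_⟩
  · rw [Set.disjoint_iff_inter_eq_empty, ← not_nonempty_iff_eq_empty]
    intro hne
    obtain ⟨x, hx⟩ := hBC i
    obtain ⟨y, hy⟩ := hBC j
    rw [hx, hy] at hne
    exact hij (B.injective (by rw [hx, hy, heq x y hne]))
  · ext z
    simp only [mem_iUnion]
    refine ⟨fun hz => ?_, fun ⟨i, hi⟩ => ?_⟩
    · obtain ⟨i, hi⟩ : C z ∈ range B := hB ▸ mem_image_of_mem C hz
      exact ⟨i, hi ▸ hmem z hz⟩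
    · obtain ⟨x, hx⟩ := hBC i
      exact hsub x (hx ▸ hi)

end Partition

section Dynamics

variable {X : Type*}

section Iterates

variable (F : Equiv.Perm X)

theorem zpow_apply_zpow (i j : ℤ) (x : X) : (F ^ i) ((F ^ j) x) = (F ^ (i + j)) x := by
  rw [zpow_add, Equiv.Perm.mul_apply]

theorem apply_zpow_apply (n : ℤ) (x : X) : F ((F ^ n) x) = (F ^ (n + 1)) x := by
  rw [add_comm, ← zpow_apply_zpow, zpow_one]

theorem symm_apply_zpow_apply (n : ℤ) (x : X) : F.symm ((F ^ n) x) = (F ^ (n - 1)) x := by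
  rw [sub_eq_neg_add, ← zpow_apply_zpow, zpow_neg_one, Equiv.Perm.inv_def]

variable {F} [MetricSpace X]

theorem continuous_zpow_apply (hF : Continuous F) (hF' : Continuous F.symm) (n : ℤ) :
    Continuous (F ^ n) := by
  induction n using Int.induction_on with
  | zero => exact continuous_id
  | succ n ih => rw [zpow_add_one, Equiv.Perm.coe_mul]; exact ih.comp hF
  | pred n ih => rw [zpow_sub_one, Equiv.Perm.coe_mul, Equiv.Perm.inv_def]; exact ih.comp hF'

theorem Ws_mono {ε ε' : ℝ} (h : ε ≤ ε') (x : X) : Ws F ε x ⊆ Ws F ε' x :=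
  fun _ hy n => (hy n).trans_le h

theorem Wu_mono {ε ε' : ℝ} (h : ε ≤ ε') (x : X) : Wu F ε x ⊆ Wu F ε' x :=
  fun _ hy n => (hy n).trans_le h

theorem Wu_eq_Ws_inv (ε : ℝ) (x : X) : Wu F ε x = Ws F⁻¹ ε x := by
  simp only [Wu, Ws, inv_zpow']

theorem CanonicalCoords.exists_bracket (h : CanonicalCoords F) {ε : ℝ} (hε : 0 < ε) :
    ∃ δ > 0, ∀ x y : X, dist x y < δ → (Ws F ε x ∩ Wu F ε y).Nonempty := by
  obtain ⟨ε₀, hε₀, hcc⟩ := h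
  obtain ⟨δ, hδ, hδcc⟩ := hcc (min ε ε₀) (lt_min hε hε₀) (min_le_right _ _)
  refine ⟨δ, hδ, fun x y hxy => ?_⟩
  obtain ⟨z, ⟨hzs, hzu⟩, -⟩ := hδcc x y hxy
  exact ⟨z, Ws_mono (min_le_left _ _) x hzs, Wu_mono (min_le_left _ _) y hzu⟩

end Iterates

section Expansive

variable [MetricSpace X] {F : Equiv.Perm X} {c : ℝ}

theorem Expansive.inv (h : Expansive F c) : Expansive F⁻¹ c := fun p q hpq => by
  obtain ⟨n, hn⟩ := h p q hpq
  exact ⟨-n, by rwa [inv_zpow', neg_neg]⟩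

theorem Expansive.eq_of_forall_dist_le (h : Expansive F c) {p q : X}
    (hpq : ∀ n : ℤ, dist ((F ^ n) p) ((F ^ n) q) ≤ c) : p = q := by
  by_contra hne
  obtain ⟨n, hn⟩ := h p q hne
  exact (hpq n).not_gt hn

variable [CompactSpace X] (hF : Continuous F) (hF' : Continuous F.symm)
include hF hF'

theorem Expansive.exists_uniform (h : Expansive F c) {β : ℝ} (hβ : 0 < β) :
    ∃ N : ℕ, ∀ u v : X, β ≤ dist u v →
      ∃ k : ℤ, k.natAbs ≤ N ∧ c < dist ((F ^ k) u) ((F ^ k) v) := by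
  have hK : IsCompact {p : X × X | β ≤ dist p.1 p.2} :=
    (isClosed_le continuous_const (continuous_fst.dist continuous_snd)).isCompact
  have hU (k : ℤ) : IsOpen {p : X × X | c < dist ((F ^ k) p.1) ((F ^ k) p.2)} :=
    isOpen_lt continuous_const
      (((continuous_zpow_apply hF hF' k).comp continuous_fst).dist
        ((continuous_zpow_apply hF hF' k).comp continuous_snd))
  have hcover : {p : X × X | β ≤ dist p.1 p.2} ⊆
      ⋃ k : ℤ, {p : X × X | c < dist ((F ^ k) p.1) ((F ^ k) p.2)} := by
    rintro ⟨u, v⟩ huv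
    have hne : u ≠ v := by
      rintro rfl
      change β ≤ dist u u at huv
      rw [dist_self] at huv
      linarith
    exact mem_iUnion.2 (h u v hne)
  obtain ⟨t, ht⟩ := hK.elim_finite_subcover _ hU hcover
  refine ⟨t.sup Int.natAbs, fun u v huv => ?_⟩
  obtain ⟨k, hk, hkuv⟩ := mem_iUnion₂.1 (ht (show (u, v) ∈ _ from huv))
  exact ⟨k, Finset.le_sup hk, hkuv⟩

theorem Expansive.exists_dist_zpow_lt_of_mem_Ws (h : Expansive F c) {ε : ℝ} (hε : ε ≤ c)
    {β : ℝ} (hβ : 0 < β) :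
    ∃ N : ℕ, ∀ x, ∀ y ∈ Ws F ε x, ∀ n : ℕ, N ≤ n →
      dist ((F ^ (n : ℤ)) x) ((F ^ (n : ℤ)) y) < β := by
  obtain ⟨N, hN⟩ := h.exists_uniform hF hF' hβ
  refine ⟨N, fun x y hy n hn => not_le.1 fun hβn => ?_⟩
  obtain ⟨k, hk, hc⟩ := hN _ _ hβn
  rw [zpow_apply_zpow, zpow_apply_zpow] at hc
  have hy' := hy (k + n).toNat
  rw [Int.toNat_of_nonneg (by omega)] at hy'
  linarith

theorem Expansive.exists_dist_zpow_neg_lt_of_mem_Wu (h : Expansive F c) {ε : ℝ} (hε : ε ≤ c)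
    {β : ℝ} (hβ : 0 < β) :
    ∃ N : ℕ, ∀ x, ∀ y ∈ Wu F ε x, ∀ n : ℕ, N ≤ n →
      dist ((F ^ (-(n : ℤ))) x) ((F ^ (-(n : ℤ))) y) < β := by
  obtain ⟨N, hN⟩ := Expansive.exists_dist_zpow_lt_of_mem_Ws (F := F⁻¹) hF' hF h.inv hε hβ
  refine ⟨N, fun x y hy n hn => ?_⟩
  rw [Wu_eq_Ws_inv] at hy
  simpa only [inv_zpow'] using hN x y hy n hn

end Expansive

section Chains

variable [MetricSpace X] (F : Equiv.Perm X)

def PseudoStep (γ : ℝ) (u v : X) : Prop := dist (F u) v < γ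

def ChainLE (a b : X) : Prop := ∀ γ > 0, TransGen (PseudoStep F γ) a b

def ChainEquiv (a b : X) : Prop := ChainLE F a b ∧ ChainLE F b a

def chainClass (x : X) : Set X := {y | ChainEquiv F x y}

variable {F} {γ : ℝ} {a b c x y : X}

theorem chainRecurrent_iff_chainLE : ChainRecurrent F x ↔ ChainLE F x x :=
  forall₂_congr fun γ _ => (transGen_iff_exists_seq (r := PseudoStep F γ)).symm

theorem PseudoStep.mono {γ' : ℝ} (h : γ ≤ γ') (hab : PseudoStep F γ a b) :
    PseudoStep F γ' a b :=
  lt_of_lt_of_le hab h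

theorem transGen_pseudoStep_mono {γ' : ℝ} (h : γ ≤ γ') (hab : TransGen (PseudoStep F γ) a b) :
    TransGen (PseudoStep F γ') a b :=
  TransGen.mono (fun _ _ huv => huv.mono h) _ _ hab

variable (F) in
theorem pseudoStep_apply (hγ : 0 < γ) (a : X) : PseudoStep F γ a (F a) := by
  simpa [PseudoStep] using hγ

variable (F) in
theorem reflTransGen_pseudoStep_zpow (hγ : 0 < γ) (a : X) (n : ℕ) :
    ReflTransGen (PseudoStep F γ) a ((F ^ (n : ℤ)) a) := by
  induction n with
  | zero => simpa using ReflTransGen.refl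
  | succ n ih =>
    refine ih.tail ?_
    simpa only [apply_zpow_apply, Nat.cast_succ] using pseudoStep_apply F hγ ((F ^ (n : ℤ)) a)

theorem transGen_pseudoStep_move_start {ρ : ℝ} {a' : X} (h : TransGen (PseudoStep F γ) a c)
    (ha : dist (F a') (F a) < ρ) : TransGen (PseudoStep F (γ + ρ)) a' c := by
  obtain ⟨b, hab, hbc⟩ := TransGen.head'_iff.1 h
  have hρ : 0 ≤ ρ := dist_nonneg.trans ha.le
  refine .head' ?_ (ReflTransGen.mono (fun _ _ huv => huv.mono (by linarith)) _ _ hbc)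
  calc dist (F a') b ≤ dist (F a') (F a) + dist (F a) b := dist_triangle _ _ _
    _ < γ + ρ := by unfold PseudoStep at hab; linarith

theorem transGen_pseudoStep_move_end {ρ : ℝ} {c' : X} (h : TransGen (PseudoStep F γ) a c)
    (hc : dist c c' < ρ) : TransGen (PseudoStep F (γ + ρ)) a c' := by
  obtain ⟨b, hab, hbc⟩ := TransGen.tail'_iff.1 h
  have hρ : 0 ≤ ρ := dist_nonneg.trans hc.le
  refine .tail' (ReflTransGen.mono (fun _ _ huv => huv.mono (by linarith)) _ _ hab) ?_
  calc dist (F b) c' ≤ dist (F b) c + dist c c' := dist_triangle _ _ _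
    _ < γ + ρ := by unfold PseudoStep at hbc; linarith

theorem ChainLE.trans (hab : ChainLE F a b) (hbc : ChainLE F b c) : ChainLE F a c :=
  fun γ hγ => (hab γ hγ).trans (hbc γ hγ)

theorem chainLE_self_apply (a : X) : ChainLE F a (F a) :=
  fun _ hγ => .single (pseudoStep_apply F hγ a)

theorem chainLE_symm_apply_self (a : X) : ChainLE F (F.symm a) a :=
  fun _ hγ => .single (by simpa using pseudoStep_apply F hγ (F.symm a))

theorem ChainEquiv.symm (h : ChainEquiv F a b) : ChainEquiv F b a := ⟨h.2, h.1⟩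

theorem ChainEquiv.trans (hab : ChainEquiv F a b) (hbc : ChainEquiv F b c) : ChainEquiv F a c :=
  ⟨hab.1.trans hbc.1, hbc.2.trans hab.2⟩

theorem ChainEquiv.chainLE_self (h : ChainEquiv F a b) : ChainLE F a a := h.1.trans h.2

theorem chainLE_self_of_mem_chainClass (hy : y ∈ chainClass F x) : ChainLE F y y :=
  hy.symm.chainLE_self

theorem chainClass_eq (h : ChainEquiv F x y) : chainClass F x = chainClass F y :=
  Set.ext fun _ => ⟨h.symm.trans, h.trans⟩

theorem chainClass_eq_of_inter (x y : X) (h : (chainClass F x ∩ chainClass F y).Nonempty) :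
    chainClass F x = chainClass F y := by
  obtain ⟨w, hwx, hwy⟩ := h
  exact (chainClass_eq hwx).trans (chainClass_eq hwy).symm

variable [CompactSpace X]

theorem chainLE_apply_self (hF : Continuous F) (hx : ChainLE F x x) : ChainLE F (F x) x := by
  intro γ hγ
  obtain ⟨η, hη, hFη⟩ := Metric.uniformContinuous_iff.1
    (CompactSpace.uniformContinuous_of_continuous hF) _ (half_pos hγ)
  have hxx := hx _ (lt_min hη (half_pos hγ))
  obtain ⟨b, hxb, hbx⟩ := TransGen.head'_iff.1 hxx
  -- going around the loop twice guarantees a nonempty chain after the first step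
  have h := transGen_pseudoStep_move_start (TransGen.trans_right hbx hxx)
    (hFη ((show dist (F x) b < _ from hxb).trans_le (min_le_left _ _)))
  exact transGen_pseudoStep_mono (by linarith [min_le_right η (γ / 2)]) h

theorem chainLE_self_symm_apply (hF' : Continuous F.symm) (hx : ChainLE F x x) :
    ChainLE F x (F.symm x) := by
  intro γ hγ
  obtain ⟨η, hη, hFη⟩ := Metric.uniformContinuous_iff.1
    (CompactSpace.uniformContinuous_of_continuous hF') _ (half_pos hγ)
  have hxx := hx _ (lt_min hη (half_pos hγ))
  obtain ⟨b, hxb, hbx⟩ := TransGen.tail'_iff.1 hxx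
  have hb := hFη ((show dist (F b) x < _ from hbx).trans_le (min_le_left _ _))
  rw [Equiv.symm_apply_apply] at hb
  have h := transGen_pseudoStep_move_end (hxx.trans_left hxb) hb
  exact transGen_pseudoStep_mono (by linarith [min_le_right η (γ / 2)]) h

theorem chainEquiv_apply_self (hF : Continuous F) (hx : ChainLE F x x) :
    ChainEquiv F (F x) x :=
  ⟨chainLE_apply_self hF hx, chainLE_self_apply x⟩

theorem chainEquiv_symm_apply_self (hF' : Continuous F.symm) (hx : ChainLE F x x) :
    ChainEquiv F (F.symm x) x :=
  ⟨chainLE_symm_apply_self x, chainLE_self_symm_apply hF' hx⟩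

theorem chainEquiv_zpow_apply_self (hF : Continuous F) (hF' : Continuous F.symm)
    (hx : ChainLE F x x) (k : ℤ) : ChainEquiv F ((F ^ k) x) x := by
  induction k using Int.induction_on with
  | zero => exact ⟨hx, hx⟩
  | succ k ih =>
    rw [← apply_zpow_apply]
    exact (chainEquiv_apply_self hF ih.chainLE_self).trans ih
  | pred k ih =>
    rw [← symm_apply_zpow_apply]
    exact (chainEquiv_symm_apply_self hF' ih.chainLE_self).trans ih

theorem isClosed_setOf_chainLE_self (hF : Continuous F) : IsClosed {x : X | ChainLE F x x} := by
  refine isClosed_of_closure_subset fun x hx γ hγ => ?_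
  obtain ⟨η, hη, hFη⟩ := Metric.uniformContinuous_iff.1
    (CompactSpace.uniformContinuous_of_continuous hF) (γ / 3) (by positivity)
  obtain ⟨y, hy, hxy⟩ := Metric.mem_closure_iff.1 hx _ (lt_min hη (by positivity : 0 < γ / 3))
  have h := transGen_pseudoStep_move_end
    (transGen_pseudoStep_move_start (hy _ (by positivity : 0 < γ / 3))
      (hFη (hxy.trans_le (min_le_left _ _))))
    ((dist_comm y x).trans_lt (hxy.trans_le (min_le_right _ _)))
  exact transGen_pseudoStep_mono (by linarith) h

end Chains

section ChainClasses

variable [MetricSpace X] [CompactSpace X] {F : Equiv.Perm X} {c ε : ℝ} {x y z : X}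

theorem chainLE_of_mem_Ws (hF : Continuous F) (hF' : Continuous F.symm) (hexp : Expansive F c)
    (hε : ε ≤ c) (hx : ChainLE F x x) (hz : z ∈ Ws F ε x) : ChainLE F z x := by
  intro γ hγ
  obtain ⟨N, hN⟩ := hexp.exists_dist_zpow_lt_of_mem_Ws hF hF' hε hγ
  have hjump : PseudoStep F γ ((F ^ (N : ℤ)) z) ((F ^ ((N + 1 : ℕ) : ℤ)) x) := by
    rw [PseudoStep, apply_zpow_apply, dist_comm, ← Nat.cast_succ]
    exact hN x z hz (N + 1) N.le_succ
  exact (TransGen.tail' (reflTransGen_pseudoStep_zpow F hγ z N) hjump).trans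
    ((chainEquiv_zpow_apply_self hF hF' hx _).1 γ hγ)

theorem chainLE_of_mem_Wu (hF : Continuous F) (hF' : Continuous F.symm) (hexp : Expansive F c)
    (hε : ε ≤ c) (hy : ChainLE F y y) (hz : z ∈ Wu F ε y) : ChainLE F y z := by
  intro γ hγ
  obtain ⟨N, hN⟩ := hexp.exists_dist_zpow_neg_lt_of_mem_Wu hF hF' hε hγ
  have hjump : PseudoStep F γ ((F ^ (-(N + 1 : ℕ) : ℤ)) y) ((F ^ (-(N : ℤ))) z) := by
    rw [PseudoStep, apply_zpow_apply, show -((N + 1 : ℕ) : ℤ) + 1 = -(N : ℤ) by push_cast; ring]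
    exact hN y z hz N le_rfl
  have horbit := reflTransGen_pseudoStep_zpow F hγ ((F ^ (-(N : ℤ))) z) N
  rw [zpow_apply_zpow, add_neg_cancel, zpow_zero, Equiv.Perm.one_apply] at horbit
  exact ((chainEquiv_zpow_apply_self hF hF' hy _).2 γ hγ).trans (TransGen.head' hjump horbit)

theorem exists_chainEquiv_of_dist_lt (hX : IsSmale F) :
    ∃ δ > 0, ∀ x y, ChainLE F x x → ChainLE F y y → dist x y < δ → ChainEquiv F x y := by
  obtain ⟨hF, hF', ⟨c, hc, hexp⟩, hcc⟩ := hX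
  obtain ⟨δ, hδ, hbr⟩ := hcc.exists_bracket hc
  refine ⟨δ, hδ, fun x y hx hy hxy => ?_⟩
  obtain ⟨z, hzx, hzy⟩ := hbr x y hxy
  obtain ⟨z', hz'y, hz'x⟩ := hbr y x (by rwa [dist_comm])
  exact ⟨(chainLE_of_mem_Wu hF hF' hexp le_rfl hx hz'x).trans
      (chainLE_of_mem_Ws hF hF' hexp le_rfl hy hz'y),
    (chainLE_of_mem_Wu hF hF' hexp le_rfl hy hzy).trans
      (chainLE_of_mem_Ws hF hF' hexp le_rfl hx hzx)⟩

theorem finite_image_chainClass (hX : IsSmale F) :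
    (chainClass F '' {x | ChainLE F x x}).Finite := by
  obtain ⟨δ, hδ, hδequiv⟩ := exists_chainEquiv_of_dist_lt hX
  obtain ⟨t, htR, htfin, hcover⟩ :=
    (isClosed_setOf_chainLE_self hX.1).isCompact.finite_cover_balls hδ
  refine (htfin.image (chainClass F)).subset ?_
  rintro _ ⟨y, hy, rfl⟩
  obtain ⟨x, hxt, hyx⟩ := mem_iUnion₂.1 (hcover hy)
  exact ⟨x, hxt, chainClass_eq (hδequiv x y (htR hxt) hy (by rw [dist_comm]; exact hyx))⟩

theorem isClosed_chainClass (hX : IsSmale F) (x : X) : IsClosed (chainClass F x) := by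
  obtain ⟨δ, hδ, hδequiv⟩ := exists_chainEquiv_of_dist_lt hX
  refine isClosed_of_closure_subset fun w hw => ?_
  have hwR : ChainLE F w w := (isClosed_setOf_chainLE_self hX.1).closure_subset_iff.2
    (fun _ hy => chainLE_self_of_mem_chainClass hy) hw
  obtain ⟨y, hy, hwy⟩ := Metric.mem_closure_iff.1 hw δ hδ
  exact hy.trans (hδequiv w y hwR (chainLE_self_of_mem_chainClass hy) hwy).symm

theorem image_chainClass (hF : Continuous F) (hF' : Continuous F.symm) (x : X) :
    F '' chainClass F x = chainClass F x := by
  refine Subset.antisymm ?_ fun y hy => ⟨F.symm y, ?_, F.apply_symm_apply y⟩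
  · rintro _ ⟨y, hy, rfl⟩
    exact hy.trans (chainEquiv_apply_self hF (chainLE_self_of_mem_chainClass hy)).symm
  · exact hy.trans (chainEquiv_symm_apply_self hF' (chainLE_self_of_mem_chainClass hy)).symm

theorem isSmaleOnSet_chainClass (hX : IsSmale F) (x : X) : IsSmaleOnSet F (chainClass F x) := by
  obtain ⟨hF, hF', ⟨c, hc, hexp⟩, ε₀, hε₀, hcc⟩ := hX
  refine ⟨⟨c, hc, fun p _ q _ => hexp p q⟩, min ε₀ c, lt_min hε₀ hc, fun ε hε hεle => ?_⟩
  obtain ⟨δ, hδ, hδcc⟩ := hcc ε hε (hεle.trans (min_le_left _ _))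
  refine ⟨δ, hδ, fun y hy y' hy' hyy' => ?_⟩
  obtain ⟨z, ⟨hzs, hzu⟩, hzuniq⟩ := hδcc y y' hyy'
  have hεc : ε ≤ c := hεle.trans (min_le_right _ _)
  have hzy := chainLE_of_mem_Ws hF hF' hexp hεc (chainLE_self_of_mem_chainClass hy) hzs
  have hy'z := chainLE_of_mem_Wu hF hF' hexp hεc (chainLE_self_of_mem_chainClass hy') hzu
  exact ⟨z, ⟨⟨⟨hy'.1.trans hy'z, hzy.trans hy.2⟩, hzs⟩, hzu⟩,
    fun w ⟨⟨_, hws⟩, hwu⟩ => hzuniq w ⟨hws, hwu⟩⟩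

end ChainClasses

section Shadowing

variable [MetricSpace X] {F : Equiv.Perm X}

theorem exists_bracket_seq {ε δ : ℝ} (hε : 0 < ε)
    (hbr : ∀ x y : X, dist x y < δ → (Ws F ε x ∩ Wu F ε y).Nonempty) {N : ℕ} {a : ℕ → X}
    (ha : ∀ k, ∀ y ∈ Ws F ε (a k), dist (a (k + 1)) ((F ^ (N : ℤ)) y) < δ) :
    ∃ x : ℕ → X, (∀ k, x k ∈ Ws F ε (a k)) ∧ ∀ k, x (k + 1) ∈ Wu F ε ((F ^ (N : ℤ)) (x k)) :=
  exists_seq_of_step (P := fun k y => y ∈ Ws F ε (a k)) (a := a 0)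
    (fun _ => by simpa using hε) fun k y hy => hbr _ _ (ha k y hy)

section BracketSequence

variable {ε : ℝ} (hε : 0 < ε) {N : ℕ}
  (hN : ∀ x, ∀ y ∈ Wu F ε x, ∀ n : ℕ, N ≤ n →
    dist ((F ^ (-(n : ℤ))) x) ((F ^ (-(n : ℤ))) y) < ε / 2)
  {x : ℕ → X} (hxu : ∀ k, x (k + 1) ∈ Wu F ε ((F ^ (N : ℤ)) (x k)))
include hε hN hxu

theorem zpow_mem_Wu_of_bracket_seq (j k : ℕ) :
    (F ^ (-(j * N : ℤ))) (x (k + j)) ∈ Wu F ε (x k) := by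
  induction j generalizing k with
  | zero => intro n; simpa using hε
  | succ j ih =>
    intro n
    have h1 := hN _ _ (hxu k) (n + N) (by omega)
    have h2 := hN _ _ (ih (k + 1)) (n + N) (by omega)
    rw [zpow_apply_zpow, show -((n + N : ℕ) : ℤ) + N = -(n : ℤ) by push_cast; ring] at h1
    rw [zpow_apply_zpow, show k + 1 + j = k + (j + 1) by ring] at h2
    rw [zpow_apply_zpow]
    calc _ ≤ dist ((F ^ (-(n : ℤ))) (x k)) ((F ^ (-((n + N : ℕ) : ℤ))) (x (k + 1))) +
          dist ((F ^ (-((n + N : ℕ) : ℤ))) (x (k + 1)))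
            ((F ^ (-((n + N : ℕ) : ℤ) + -(j * N : ℤ))) (x (k + (j + 1)))) := by
          convert dist_triangle _ _ _ using 5
          push_cast
          ring
      _ < ε / 2 + ε / 2 := add_lt_add h1 h2
      _ = ε := add_halves ε

theorem dist_zpow_lt_of_bracket_seq (hN0 : 0 < N) {a : ℕ → X} (hxs : ∀ k, x k ∈ Ws F ε (a k))
    {m t : ℕ} (ht : t < m * N) :
    dist ((F ^ ((t : ℤ) - m * N)) (x m)) ((F ^ ((t % N : ℕ) : ℤ)) (a (t / N))) < 3 * ε := by
  set k := t / N
  set i := t % N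
  have hi : i < N := Nat.mod_lt _ hN0
  have htki : t = k * N + i := (Nat.div_add_mod' t N).symm
  obtain ⟨j, rfl⟩ : ∃ j, m = k + 1 + j :=
    ⟨m - (k + 1), by have := (Nat.div_lt_iff_lt_mul hN0).2 ht; omega⟩
  have d1 := zpow_mem_Wu_of_bracket_seq hε hN hxu j (k + 1) (N - i)
  have d2 := hxu k (N - i)
  have d3 := hxs k i
  have e1 : (t : ℤ) - ((k + 1 + j : ℕ) : ℤ) * N = -((N - i : ℕ) : ℤ) + -(j * N : ℤ) := by
    push_cast [Nat.cast_sub hi.le, htki]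
    ring
  have e2 : -((N - i : ℕ) : ℤ) + N = i := by
    push_cast [Nat.cast_sub hi.le]
    ring
  rw [zpow_apply_zpow] at d1 d2
  rw [e2] at d2
  rw [e1]
  calc _ ≤ dist ((F ^ (-((N - i : ℕ) : ℤ) + -(j * N : ℤ))) (x (k + 1 + j)))
          ((F ^ (-((N - i : ℕ) : ℤ))) (x (k + 1))) +
        dist ((F ^ (-((N - i : ℕ) : ℤ))) (x (k + 1))) ((F ^ (i : ℤ)) (x k)) +
        dist ((F ^ (i : ℤ)) (x k)) ((F ^ (i : ℤ)) (a k)) := dist_triangle4 _ _ _ _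
    _ < ε + ε + ε := by
      rw [dist_comm] at d1 d2 d3
      gcongr
    _ = 3 * ε := by ring

end BracketSequence

variable [CompactSpace X]

theorem exists_dist_zpow_lt_of_pseudoOrbit (hF : Continuous F) (N : ℕ) {θ : ℝ} (hθ : 0 < θ) :
    ∃ α > 0, ∀ z : ℕ → X, (∀ i < N, dist (F (z i)) (z (i + 1)) < α) →
      ∀ i ≤ N, dist ((F ^ (i : ℤ)) (z 0)) (z i) < θ := by
  induction N generalizing θ with
  | zero =>
    refine ⟨1, one_pos, fun z _ i hi => ?_⟩
    obtain rfl : i = 0 := by omega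
    simpa using hθ
  | succ N ih =>
    obtain ⟨η, hη, hFη⟩ := Metric.uniformContinuous_iff.1
      (CompactSpace.uniformContinuous_of_continuous hF) _ (half_pos hθ)
    obtain ⟨α, hα, hαN⟩ := ih (lt_min hη (half_pos hθ))
    refine ⟨min α (θ / 2), lt_min hα (half_pos hθ), fun z hz i hi => ?_⟩
    have hprev := hαN z fun j hj => (hz j (by omega)).trans_le (min_le_left _ _)
    rcases Nat.lt_or_ge i (N + 1) with hi' | hi'
    · exact (hprev i (by omega)).trans_le ((min_le_right _ _).trans (half_le_self hθ.le))
    obtain rfl : i = N + 1 := by omega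
    have h1 := hFη ((hprev N le_rfl).trans_le (min_le_left _ _))
    rw [apply_zpow_apply] at h1
    have h2 := (hz N N.lt_succ_self).trans_le (min_le_right _ _)
    calc dist ((F ^ ((N + 1 : ℕ) : ℤ)) (z 0)) (z (N + 1))
        ≤ dist ((F ^ ((N : ℤ) + 1)) (z 0)) (F (z N)) + dist (F (z N)) (z (N + 1)) := by
          push_cast; exact dist_triangle _ _ _
      _ < θ / 2 + θ / 2 := add_lt_add h1 h2
      _ = θ := add_halves θ

theorem exists_finite_shadow (hX : IsSmale F) {Γ : ℝ} (hΓ : 0 < Γ) :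
    ∃ α > 0, ∀ ζ : ℕ → X, (∀ t, dist (F (ζ t)) (ζ (t + 1)) < α) →
      ∀ T : ℕ, ∃ w, ∀ t ≤ T, dist ((F ^ (t : ℤ)) w) (ζ t) < Γ := by
  obtain ⟨hF, hF', ⟨c, hc, hexp⟩, hcc⟩ := hX
  set ε := min c (Γ / 4)
  have hε : 0 < ε := lt_min hc (by positivity)
  obtain ⟨δ, hδ, hbr⟩ := hcc.exists_bracket hε
  obtain ⟨Ns, hNs⟩ :=
    hexp.exists_dist_zpow_lt_of_mem_Ws hF hF' (min_le_left _ _) (half_pos hδ)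
  obtain ⟨Nu, hNu⟩ :=
    hexp.exists_dist_zpow_neg_lt_of_mem_Wu hF hF' (min_le_left _ _) (half_pos hε)
  set N := max Ns Nu + 1
  obtain ⟨α, hα, hαN⟩ := exists_dist_zpow_lt_of_pseudoOrbit hF N
    (lt_min (by positivity : 0 < Γ / 4) (half_pos hδ))
  refine ⟨α, hα, fun ζ hζ T => ?_⟩
  have hblock (k : ℕ) : ∀ i ≤ N,
      dist ((F ^ (i : ℤ)) (ζ (k * N))) (ζ (k * N + i)) < min (Γ / 4) (δ / 2) := by
    simpa using hαN (fun i => ζ (k * N + i)) fun i _ => hζ (k * N + i)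
  have hnext (k : ℕ) (y : X) (hy : y ∈ Ws F ε (ζ (k * N))) :
      dist (ζ ((k + 1) * N)) ((F ^ (N : ℤ)) y) < δ := by
    have h1 := (hblock k N le_rfl).trans_le (min_le_right _ _)
    have h2 := hNs _ y hy N (by omega)
    rw [show (k + 1) * N = k * N + N by ring]
    calc _ ≤ dist (ζ (k * N + N)) ((F ^ (N : ℤ)) (ζ (k * N))) +
          dist ((F ^ (N : ℤ)) (ζ (k * N))) ((F ^ (N : ℤ)) y) := dist_triangle _ _ _
      _ < δ / 2 + δ / 2 := add_lt_add (by rwa [dist_comm]) h2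
      _ = δ := add_halves δ
  obtain ⟨x, hxs, hxu⟩ := exists_bracket_seq hε hbr hnext
  set m := T / N + 1
  refine ⟨(F ^ (-((m : ℤ) * N))) (x m), fun t ht => ?_⟩
  have hshadow := dist_zpow_lt_of_bracket_seq hε (fun x y hy n hn => hNu x y hy n (by omega))
    hxu (by omega) hxs (ht.trans_lt ((Nat.div_lt_iff_lt_mul (by omega)).1 (lt_add_one _)))
  have hclose := (hblock (t / N) (t % N) (Nat.mod_lt _ (by omega)).le).trans_le (min_le_left _ _)
  rw [Nat.div_add_mod'] at hclose
  rw [zpow_apply_zpow, ← sub_eq_add_neg]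
  calc _ ≤ dist ((F ^ ((t : ℤ) - m * N)) (x m)) ((F ^ ((t % N : ℕ) : ℤ)) (ζ (t / N * N))) +
        dist ((F ^ ((t % N : ℕ) : ℤ)) (ζ (t / N * N))) (ζ t) := dist_triangle _ _ _
    _ < 3 * ε + Γ / 4 := add_lt_add hshadow hclose
    _ ≤ Γ := by linarith [min_le_right c (Γ / 4)]

theorem exists_shadow (hX : IsSmale F) {Γ : ℝ} (hΓ : 0 < Γ) :
    ∃ α > 0, ∀ ζ : ℤ → X, (∀ t, dist (F (ζ t)) (ζ (t + 1)) < α) →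
      ∃ p, ∀ t, dist ((F ^ t) p) (ζ t) ≤ Γ := by
  obtain ⟨α, hα, hshadow⟩ := exists_finite_shadow hX hΓ
  refine ⟨α, hα, fun ζ hζ => ?_⟩
  let S (T : ℕ) : Set X := {p | ∀ t : ℤ, t.natAbs ≤ T → dist ((F ^ t) p) (ζ t) ≤ Γ}
  have hS_closed (T : ℕ) : IsClosed (S T) := by
    simp only [S, ofPred_forall]
    exact isClosed_iInter fun t => isClosed_iInter fun _ => isClosed_le
      ((continuous_zpow_apply hX.1 hX.2.1 t).dist continuous_const) continuous_const
  have hS_nonempty (T : ℕ) : (S T).Nonempty := by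
    obtain ⟨w, hw⟩ := hshadow (fun s => ζ (s - T)) (fun s => by
      have h := hζ (s - T)
      rwa [show (s : ℤ) - T + 1 = ((s + 1 : ℕ) : ℤ) - T by push_cast; ring] at h) (2 * T)
    refine ⟨(F ^ (T : ℤ)) w, fun t ht => ?_⟩
    have h := hw (t + T).toNat (by omega)
    rw [Int.toNat_of_nonneg (by omega), add_sub_cancel_right] at h
    rw [zpow_apply_zpow]
    exact h.le
  obtain ⟨p, hp⟩ := IsCompact.nonempty_iInter_of_sequence_nonempty_isCompact_isClosed S
    (fun T p hp t ht => hp t (by omega)) hS_nonempty (hS_closed 0).isCompact hS_closed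
  exact ⟨p, fun t => mem_iInter.1 hp t.natAbs t le_rfl⟩

theorem exists_periodic_shadow (hX : IsSmale F) {Γ : ℝ} (hΓ : 0 < Γ) :
    ∃ α > 0, ∀ (P : ℕ) (ζ : ℤ → X), Function.Periodic ζ P →
      (∀ t, dist (F (ζ t)) (ζ (t + 1)) < α) →
      ∃ p, (F ^ (P : ℤ)) p = p ∧ ∀ t, dist ((F ^ t) p) (ζ t) ≤ Γ := by
  obtain ⟨c, hc, hexp⟩ := hX.2.2.1
  obtain ⟨α, hα, hshadow⟩ := exists_shadow hX (lt_min hΓ (half_pos hc))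
  refine ⟨α, hα, fun P ζ hper hζ => ?_⟩
  obtain ⟨p, hp⟩ := hshadow ζ hζ
  -- `F^P p` shadows `ζ` as well, and by expansivity `ζ` has only one `c/2`-shadow
  refine ⟨p, hexp.eq_of_forall_dist_le fun n => ?_, fun t => (hp t).trans (min_le_left _ _)⟩
  have h1 := (hp (n + P)).trans (min_le_right _ _)
  rw [← zpow_apply_zpow, hper n] at h1
  calc dist ((F ^ n) ((F ^ (P : ℤ)) p)) ((F ^ n) p)
      ≤ dist ((F ^ n) ((F ^ (P : ℤ)) p)) (ζ n) + dist ((F ^ n) p) (ζ n) :=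
        dist_triangle_right _ _ _
    _ ≤ c / 2 + c / 2 := add_le_add h1 ((hp n).trans (min_le_right _ _))
    _ = c := add_halves c

end Shadowing

section Transitivity

variable [MetricSpace X] {F : Equiv.Perm X}

theorem IsPeriodicPoint.chainLE_self {p : X} (hp : IsPeriodicPoint F p) : ChainLE F p p := by
  obtain ⟨N, hN, hpN⟩ := hp
  intro γ hγ
  obtain ⟨n, rfl⟩ : ∃ n, N = n + 1 := ⟨N - 1, by omega⟩
  have h := TransGen.tail' (reflTransGen_pseudoStep_zpow F hγ p n) (pseudoStep_apply F hγ _)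
  rwa [apply_zpow_apply, ← Nat.cast_succ, hpN] at h

variable [CompactSpace X]

theorem exists_periodicPoint_near_of_chainEquiv (hX : IsSmale F) {u v : X}
    (huv : ChainEquiv F v u) {Γ : ℝ} (hΓ : 0 < Γ) :
    ∃ p, IsPeriodicPoint F p ∧ dist p v ≤ Γ ∧ ∃ n : ℕ, dist ((F ^ (n : ℤ)) p) u ≤ Γ := by
  obtain ⟨α, hα, hshadow⟩ := exists_periodic_shadow hX hΓ
  obtain ⟨m, n, hm, hn, z, hz0, hzm, hzP, hz⟩ := (huv.1 α hα).exists_seq_through (huv.2 α hα)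
  obtain ⟨ζ, hper, hζ, hζz⟩ := exists_periodic_of_loop (by omega) (hzP.trans hz0.symm) hz
  obtain ⟨p, hpP, hp⟩ := hshadow (m + n) ζ hper hζ
  refine ⟨p, ⟨m + n, by omega, hpP⟩, ?_, m, ?_⟩
  · have h := hp 0
    rwa [zpow_zero, Equiv.Perm.one_apply, ← Nat.cast_zero, hζz 0 (by omega), hz0] at h
  · have h := hp m
    rwa [hζz m (by omega), hzm] at h

theorem transitiveOnSet_chainClass (hX : IsSmale F) (x : X) :
    TransitiveOnSet F (chainClass F x) := by
  obtain ⟨δ, hδ, hδequiv⟩ := exists_chainEquiv_of_dist_lt hX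
  rintro U V hU hV ⟨u, huU, hu⟩ ⟨v, hvV, hv⟩
  obtain ⟨ru, hru, hruU⟩ := Metric.isOpen_iff.1 hU u huU
  obtain ⟨rv, hrv, hrvV⟩ := Metric.isOpen_iff.1 hV v hvV
  set Γ := min (min ru rv) δ / 2 with hΓdef
  have hΓ : 0 < Γ := half_pos (lt_min (lt_min hru hrv) hδ)
  have hΓu : Γ < ru := by linarith [hΓdef, min_le_left (min ru rv) δ, min_le_left ru rv]
  have hΓv : Γ < rv := by linarith [hΓdef, min_le_left (min ru rv) δ, min_le_right ru rv]
  have hΓδ : Γ < δ := by linarith [hΓdef, min_le_right (min ru rv) δ]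
  obtain ⟨p, hpP, hpv, n, hpu⟩ := exists_periodicPoint_near_of_chainEquiv hX (hv.symm.trans hu) hΓ
  have hvp := hδequiv v p hv.symm.chainLE_self hpP.chainLE_self
    ((dist_comm v p).trans_lt (hpv.trans_lt hΓδ))
  exact ⟨n, p, ⟨hruU (hpu.trans_lt hΓu), hrvV (hpv.trans_lt hΓv)⟩, hv.trans hvp⟩

end Transitivity

end Dynamics

/-- Spectral decomposition: the chain recurrent set of a Smale space is a
finite disjoint union of compact invariant sets on each of which the map is a transitive
Smale space. -/
theorem stmt17 {X : Type*} [MetricSpace X] [CompactSpace X] (F : Equiv.Perm X)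
    (hX : IsSmale F) :
    ∃ (l : ℕ) (B : Fin l → Set X),
      (∀ i, IsCompact (B i)) ∧
      (∀ i, (⇑F) '' B i = B i) ∧
      (∀ i j, i ≠ j → Disjoint (B i) (B j)) ∧
      {x | ChainRecurrent F x} = ⋃ i, B i ∧
      (∀ i, TransitiveOnSet F (B i)) ∧
      (∀ i, IsSmaleOnSet F (B i)) := by
  have hR : {x | ChainRecurrent F x} = {x | ChainLE F x x} :=
    Set.ext fun _ => chainRecurrent_iff_chainLE
  obtain ⟨l, B, hB, hdisj, hunion⟩ :=
    exists_fin_partition (R := {x | ChainLE F x x}) (C := chainClass F) (fun _ hx => ⟨hx, hx⟩)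
      (fun _ _ => chainLE_self_of_mem_chainClass) chainClass_eq_of_inter
      (finite_image_chainClass hX)
  refine ⟨l, B, fun i => ?_, fun i => ?_, hdisj, hR.trans hunion, fun i => ?_, fun i => ?_⟩ <;>
    obtain ⟨x, hx⟩ := hB i <;> rw [hx]
  · exact (isClosed_chainClass hX x).isCompact
  · exact image_chainClass hX.1 hX.2.1 x
  · exact transitiveOnSet_chainClass hX x
  · exact isSmaleOnSet_chainClass hX x
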